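/- Model checking over the SNM is strictly cheaper than over the translated Kripke model: let SN be a social network model and φ a KBL formula such that outerK(φ) is nonempty and KB_i is nonempty for every agent i with some K_i φ_i ∈ outerK(φ); then Σ_{K_i φ_i ∈ outerK(φ)} 2^{|φ_{KB_i}|} · |φ_i| < 2^{|φ_SN|} · |φ^K|. -/

import Mathlib

/-- KBL formulas: atomic predicates (predicate symbol applied to terms of the
finite domain, folded into the type `Pred`), connection atoms, action atoms,
negation, conjunction and knowledge modalities. -/
inductive Formula (Ag Pred Conn Act : Type) : Type
  | atom : Pred → Formula Ag Pred Conn Act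
  | conn : Conn → Ag → Ag → Formula Ag Pred Conn Act
  | act  : Act → Ag → Ag → Formula Ag Pred Conn Act
  | neg  : Formula Ag Pred Conn Act → Formula Ag Pred Conn Act
  | and  : Formula Ag Pred Conn Act → Formula Ag Pred Conn Act → Formula Ag Pred Conn Act
  | know : Ag → Formula Ag Pred Conn Act → Formula Ag Pred Conn Act
  deriving DecidableEq

variable {Ag Pred Conn Act : Type}

/-- Material implication, encoded classically. -/
def Formula.imp (φ ψ : Formula Ag Pred Conn Act) : Formula Ag Pred Conn Act :=
  Formula.neg (Formula.and φ (Formula.neg ψ))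

/-- Propositional formulas, used to define substitution instances of
propositional tautologies (axiom A1). -/
inductive PropForm : Type
  | var : ℕ → PropForm
  | neg : PropForm → PropForm
  | and : PropForm → PropForm → PropForm

def PropForm.eval (v : ℕ → Bool) : PropForm → Bool
  | .var n => v n
  | .neg p => !(p.eval v)
  | .and p q => p.eval v && q.eval v

/-- A propositional tautology. -/
def PropForm.Taut (p : PropForm) : Prop := ∀ v, p.eval v = true

def PropForm.subst (σ : ℕ → Formula Ag Pred Conn Act) : PropForm → Formula Ag Pred Conn Act
  | .var n => σ n
  | .neg p => Formula.neg (p.subst σ)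
  | .and p q => Formula.and (p.subst σ) (q.subst σ)

/-- A KBL formula that is a substitution instance of a propositional tautology. -/
def Formula.IsTautInstance (φ : Formula Ag Pred Conn Act) : Prop :=
  ∃ (p : PropForm) (σ : ℕ → Formula Ag Pred Conn Act), p.Taut ∧ p.subst σ = φ

/-- KD4-derivability `Γ ⊢ φ`: assumptions, propositional tautologies (A1),
distribution (A2), positive introspection (A4), consistency (D, with falsum
taken as a contradictory formula `φ ∧ ¬φ`), modus ponens (R1) and
necessitation from the empty set of assumptions (R2). -/
inductive Deriv : Set (Formula Ag Pred Conn Act) → Formula Ag Pred Conn Act → Prop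
  | mem {Γ} {φ : Formula Ag Pred Conn Act} : φ ∈ Γ → Deriv Γ φ
  | taut {Γ} {φ : Formula Ag Pred Conn Act} : φ.IsTautInstance → Deriv Γ φ
  | a2 (Γ) (i : Ag) (φ ψ : Formula Ag Pred Conn Act) :
      Deriv Γ (Formula.imp
        (Formula.and (Formula.know i φ) (Formula.know i (Formula.imp φ ψ)))
        (Formula.know i ψ))
  | a4 (Γ) (i : Ag) (φ : Formula Ag Pred Conn Act) :
      Deriv Γ (Formula.imp (Formula.know i φ) (Formula.know i (Formula.know i φ)))
  | dax (Γ) (i : Ag) (φ : Formula Ag Pred Conn Act) :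
      Deriv Γ (Formula.neg (Formula.know i (Formula.and φ (Formula.neg φ))))
  | mp {Γ} {φ ψ : Formula Ag Pred Conn Act} :
      Deriv Γ (Formula.imp φ ψ) → Deriv Γ φ → Deriv Γ ψ
  | nec (Γ) (i : Ag) {φ : Formula Ag Pred Conn Act} :
      Deriv (∅ : Set (Formula Ag Pred Conn Act)) φ → Deriv Γ (Formula.know i φ)

/-- A social network model: connection relations, permitted-action relations,
a finite knowledge base for every agent, and the environment's knowledge base
(the set of true atomic predicates). -/
structure SNM (Ag Pred Conn Act : Type) where
  conn : Conn → Ag → Ag → Prop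
  act : Act → Ag → Ag → Prop
  KB : Ag → Finset (Formula Ag Pred Conn Act)
  KBe : Finset Pred

/-- Satisfaction of a KBL formula in a social network model. -/
def SNM.Sat (SN : SNM Ag Pred Conn Act) : Formula Ag Pred Conn Act → Prop
  | .atom p => p ∈ SN.KBe
  | .conn m i j => SN.conn m i j
  | .act n i j => SN.act n i j
  | .neg φ => ¬ SN.Sat φ
  | .and φ ψ => SN.Sat φ ∧ SN.Sat ψ
  | .know i φ => Deriv (↑(SN.KB i) : Set (Formula Ag Pred Conn Act)) φ

/-- Knowledge consistency of the knowledge bases of an SNM. -/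
def SNM.KnowConsistent (SN : SNM Ag Pred Conn Act) : Prop :=
  ∀ (i : Ag) (φ : Formula Ag Pred Conn Act),
    Deriv (↑(SN.KB i) : Set (Formula Ag Pred Conn Act)) φ →
    ¬ Deriv (↑(SN.KB i) : Set (Formula Ag Pred Conn Act)) (Formula.neg φ)

/-- Self-awareness of the knowledge bases of an SNM. -/
def SNM.SelfAware (SN : SNM Ag Pred Conn Act) : Prop :=
  ∀ (i : Ag) (φ : Formula Ag Pred Conn Act),
    Deriv (↑(SN.KB i) : Set (Formula Ag Pred Conn Act)) φ →
    Deriv (↑(SN.KB i) : Set (Formula Ag Pred Conn Act)) (Formula.know i φ)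

/-- Conjunction of a nonempty list of formulas (head `a`, tail `l`). -/
def conjNE (a : Formula Ag Pred Conn Act) (l : List (Formula Ag Pred Conn Act)) :
    Formula Ag Pred Conn Act :=
  l.foldl Formula.and a

/-- The characteristic set `Φ_SN` of a social network model. -/
def SNM.CharSet (SN : SNM Ag Pred Conn Act) : Set (Formula Ag Pred Conn Act) :=
  {ψ | ∃ p ∈ SN.KBe, ψ = Formula.atom p} ∪
  {ψ | ∃ (i : Ag) (φ : Formula Ag Pred Conn Act), φ ∈ SN.KB i ∧ ψ = Formula.know i φ} ∪
  {ψ | ∃ (m : Conn) (i j : Ag), SN.conn m i j ∧ ψ = Formula.conn m i j} ∪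
  {ψ | ∃ (n : Act) (i j : Ag), SN.act n i j ∧ ψ = Formula.act n i j}

/-- A formula is KD4-consistent when its negation is not derivable from no
assumptions. -/
def KD4Consistent (φ : Formula Ag Pred Conn Act) : Prop :=
  ¬ Deriv (∅ : Set (Formula Ag Pred Conn Act)) (Formula.neg φ)

/-- A set of formulas is KD4-consistent when no contradiction is derivable from it. -/
def SetKD4Consistent (Γ : Set (Formula Ag Pred Conn Act)) : Prop :=
  ∀ ψ : Formula Ag Pred Conn Act, ¬ (Deriv Γ ψ ∧ Deriv Γ (Formula.neg ψ))

/-- Subformulas of a formula (including the formula itself). -/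
def Formula.sub : Formula Ag Pred Conn Act → Set (Formula Ag Pred Conn Act)
  | .atom p => {Formula.atom p}
  | .conn m i j => {Formula.conn m i j}
  | .act n i j => {Formula.act n i j}
  | .neg φ => insert (Formula.neg φ) φ.sub
  | .and φ ψ => insert (Formula.and φ ψ) (φ.sub ∪ ψ.sub)
  | .know i φ => insert (Formula.know i φ) φ.sub

/-- `Sub⁺(φ)`: subformulas of `φ` together with their negations. -/
def SubPlus (φ : Formula Ag Pred Conn Act) : Set (Formula Ag Pred Conn Act) :=
  φ.sub ∪ (Formula.neg '' φ.sub)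

/-- `Con(φ)` (named `ConKD4`): maximal KD4-consistent subsets of `Sub⁺(φ)`. -/
def ConKD4 (φ : Formula Ag Pred Conn Act) : Set (Set (Formula Ag Pred Conn Act)) :=
  {Θ | Θ ⊆ SubPlus φ ∧ SetKD4Consistent Θ ∧
    ∀ ψ ∈ SubPlus φ, ψ ∉ Θ → ¬ SetKD4Consistent (insert ψ Θ)}

/-- `Θ/K_i = {ψ | K_i ψ ∈ Θ}`. -/
def projK (i : Ag) (Θ : Set (Formula Ag Pred Conn Act)) : Set (Formula Ag Pred Conn Act) :=
  {ψ | Formula.know i ψ ∈ Θ}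

/-- Kripke models: states, a valuation assigning truth values of atomic
formulas at each state, and accessibility relations. -/
structure Kripke (Ag Pred Conn Act : Type) where
  State : Type
  val : State → Formula Ag Pred Conn Act → Prop
  acc : Ag → State → State → Prop

/-- The canonical Kripke model `M_φ` of a (KD4-consistent) formula `φ`. -/
def canonical (φ : Formula Ag Pred Conn Act) : Kripke Ag Pred Conn Act where
  State := {Θ : Set (Formula Ag Pred Conn Act) // Θ ∈ ConKD4 φ}
  val := fun s ψ => ψ ∈ s.1
  acc := fun i s t => projK i s.1 ⊆ projK i t.1 ∧ projK i s.1 ⊆ t.1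

/-- Satisfaction of a formula at a state of a Kripke model. -/
def KSat (M : Kripke Ag Pred Conn Act) : M.State → Formula Ag Pred Conn Act → Prop
  | s, .atom p => M.val s (Formula.atom p)
  | s, .conn m i j => M.val s (Formula.conn m i j)
  | s, .act n i j => M.val s (Formula.act n i j)
  | s, .neg ψ => ¬ KSat M s ψ
  | s, .and ψ χ => KSat M s ψ ∧ KSat M s χ
  | s, .know i ψ => ∀ t, M.acc i s t → KSat M t ψ

/-- Length (number of symbols) of a formula; atoms count as one symbol. -/
def Formula.len : Formula Ag Pred Conn Act → ℕ
  | .atom _ => 1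
  | .conn _ _ _ => 1
  | .act _ _ _ => 1
  | .neg φ => φ.len + 1
  | .and φ ψ => φ.len + ψ.len + 1
  | .know _ φ => φ.len + 1

/-- `outerK(φ)`: the subformulas of `φ` of the form `K_i ψ` that are not under
the scope of any knowledge modality. -/
def outerK : Formula Ag Pred Conn Act → List (Formula Ag Pred Conn Act)
  | .neg φ => outerK φ
  | .and φ ψ => outerK φ ++ outerK ψ
  | .know i φ => [Formula.know i φ]
  | .atom _ => []
  | .conn _ _ _ => []
  | .act _ _ _ => []

/-- The length of the conjunction of the formulas of a list: the lengths of
the conjuncts plus one symbol for each `∧`. -/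
def conjLen (l : List (Formula Ag Pred Conn Act)) : ℕ :=
  (l.map Formula.len).sum + (l.length - 1)

/-! The cost `2 ^ |φ_{KB_i}| · |φ_i|` of each outer modality `K_i φ_i` is below `2 ^ |φ_SN| · |K_i φ_i|`:
every `K_i ψ` with `ψ ∈ KB_i` is a conjunct of `φ_SN`, so `|φ_{KB_i}| ≤ |φ_SN|`, and
`|K_i φ_i| = |φ_i| + 1`. Summing over the (nonempty) list `outerK(φ)` gives the strict inequality,
since `|φ^K|` is at least the sum of the lengths of its conjuncts. -/

theorem List.sum_map_le_sum_map_of_subset {α : Type*} {l L : List α} (hl : l.Nodup)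
    (h : l ⊆ L) (f : α → ℕ) : (l.map f).sum ≤ (L.map f).sum := by
  obtain ⟨l', hperm, hsub⟩ := List.subperm_of_subset hl h
  rw [← (hperm.map f).sum_eq]
  exact (hsub.map f).sum_le_sum fun _ _ => Nat.zero_le _

theorem exists_eq_know_of_mem_outerK {φ χ : Formula Ag Pred Conn Act} (h : χ ∈ outerK φ) :
    ∃ i ψ, χ = Formula.know i ψ := by
  induction φ with
  | neg φ ih => exact ih h
  | and φ₁ φ₂ ih₁ ih₂ => exact (List.mem_append.mp h).elim ih₁ ih₂
  | know i ψ => exact ⟨i, ψ, List.mem_singleton.mp h⟩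
  | atom | conn | act => simp [outerK] at h

theorem sum_len_le_conjLen (l : List (Formula Ag Pred Conn Act)) :
    (l.map Formula.len).sum ≤ conjLen l :=
  Nat.le_add_right _ _

theorem conjLen_le_sum_len_map_know (i : Ag) (l : List (Formula Ag Pred Conn Act)) :
    conjLen l ≤ ((l.map (Formula.know i)).map Formula.len).sum := by
  have hlen : ((l.map (Formula.know i)).map Formula.len).sum = (l.map Formula.len).sum + l.length := by
    simp only [List.map_map, Function.comp_def, Formula.len, List.sum_map_add, List.map_const',
      List.sum_replicate, smul_eq_mul, mul_one]
  rw [hlen, conjLen]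
  omega

theorem SNM.conjLen_KB_le_conjLen_charSet (SN : SNM Ag Pred Conn Act)
    {L : List (Formula Ag Pred Conn Act)} (hL : ∀ ψ, ψ ∈ L ↔ ψ ∈ SN.CharSet)
    {kb : List (Formula Ag Pred Conn Act)} {i : Ag} (hkbnd : kb.Nodup)
    (hkb : ∀ ψ ∈ kb, ψ ∈ SN.KB i) : conjLen kb ≤ conjLen L := by
  have hsub : kb.map (Formula.know i) ⊆ L := by
    intro χ hχ
    obtain ⟨ψ, hψ, rfl⟩ := List.mem_map.mp hχ
    exact (hL _).mpr (Or.inl (Or.inl (Or.inr ⟨i, ψ, hkb ψ hψ, rfl⟩)))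
  have hnd : (kb.map (Formula.know i)).Nodup :=
    hkbnd.map fun _ _ h => (Formula.know.inj h).2
  calc conjLen kb ≤ ((kb.map (Formula.know i)).map Formula.len).sum :=
        conjLen_le_sum_len_map_know i kb
    _ ≤ (L.map Formula.len).sum := List.sum_map_le_sum_map_of_subset hnd hsub _
    _ ≤ conjLen L := sum_len_le_conjLen L

theorem sum_map_lt_mul_conjLen {D : List (Formula Ag Pred Conn Act)} (hD : D ≠ [])
    {f : Formula Ag Pred Conn Act → ℕ} {B : ℕ} (hf : ∀ χ ∈ D, f χ < B * χ.len) :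
    (D.map f).sum < B * conjLen D :=
  calc (D.map f).sum < (D.map fun χ => B * χ.len).sum := by
        obtain ⟨χ, hχ⟩ := List.exists_mem_of_ne_nil D hD
        exact List.sum_lt_sum _ _ (fun χ hχ => (hf χ hχ).le) ⟨χ, hχ, hf χ hχ⟩
    _ = B * (D.map Formula.len).sum := List.sum_map_mul_left D _ B
    _ ≤ B * conjLen D := Nat.mul_le_mul_left B (sum_len_le_conjLen D)

/-- `L` enumerates `Φ_SN` and `kb i` enumerates `KB_i` without repetitions, so that
`conjLen L = |φ_SN|`, `conjLen (kb i) = |φ_{KB_i}|` and `conjLen (outerK φ).dedup = |φ^K|`. -/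
theorem snm_model_checking_cheaper
    {Ag Pred Conn Act : Type}
    [DecidableEq Ag] [DecidableEq Pred] [DecidableEq Conn] [DecidableEq Act]
    (SN : SNM Ag Pred Conn Act) (φ : Formula Ag Pred Conn Act)
    (L : List (Formula Ag Pred Conn Act))
    (hL : ∀ ψ : Formula Ag Pred Conn Act, ψ ∈ L ↔ ψ ∈ SN.CharSet)
    (kb : Ag → List (Formula Ag Pred Conn Act)) (hkbnd : ∀ i, (kb i).Nodup)
    (hkb : ∀ (i : Ag) (ψ : Formula Ag Pred Conn Act), ψ ∈ kb i ↔ ψ ∈ SN.KB i)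
    (hout : outerK φ ≠ []) :
    ((outerK φ).dedup.map (fun χ =>
        match χ with
        | Formula.know i ψ => 2 ^ conjLen (kb i) * ψ.len
        | _ => 0)).sum
      < 2 ^ conjLen L * conjLen (outerK φ).dedup := by
  refine sum_map_lt_mul_conjLen (by simpa [List.dedup_eq_nil] using hout) fun χ hχ => ?_
  obtain ⟨i, ψ, rfl⟩ := exists_eq_know_of_mem_outerK (List.mem_dedup.mp hχ)
  have hpow : 2 ^ conjLen (kb i) ≤ 2 ^ conjLen L :=
    Nat.pow_le_pow_right two_pos
      (SN.conjLen_KB_le_conjLen_charSet hL (hkbnd i) fun ψ => (hkb i ψ).mp)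
  calc 2 ^ conjLen (kb i) * ψ.len ≤ 2 ^ conjLen L * ψ.len := Nat.mul_le_mul_right _ hpow
    _ < 2 ^ conjLen L * (Formula.know i ψ).len := by
      rw [Formula.len]
      exact Nat.mul_lt_mul_of_pos_left (Nat.lt_succ_self _) (Nat.two_pow_pos _)
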